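/- Define a product on P_n by f ⋆ g := ϖ(ϖ⁻¹(f) ∘ ϖ⁻¹(g)), where ϖ(T) = T(φ_n). Then for T ∈ 𝒟(P_n) and all f ∈ P_n, Tf = f ⋆ ϖ(T); consequently (Tf) ⋆ g = f ⋆ (Tg) = T(f ⋆ g) for all f, g ∈ P_n. -/

import Mathlib

open Polynomial

/-- `P n` is the space of complex polynomials of degree at most `n`. -/
noncomputable def Pn (n : ℕ) : Submodule ℂ (Polynomial ℂ) := Polynomial.degreeLT ℂ (n + 1)

noncomputable instance instPnEndAddCommGroup (n : ℕ) : AddCommGroup (Module.End ℂ (Pn n)) :=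
  LinearMap.addCommGroup

noncomputable instance instPnEndRing (n : ℕ) : Ring (Module.End ℂ (Pn n)) := Module.End.instRing

/-- The differentiation operator on `Pn n`. -/
noncomputable def Dop (n : ℕ) : Module.End ℂ (Pn n) :=
  (Polynomial.derivative (R := ℂ)).restrict (p := Pn n) (q := Pn n)
    (fun f hf => by
      simp only [Pn, Polynomial.mem_degreeLT] at *
      exact lt_of_le_of_lt (Polynomial.degree_derivative_le) hf)

/-- `calD n` is the span of `I, D, D^2, ..., D^n` in `L(Pn n)`. -/
noncomputable def calD (n : ℕ) : Submodule ℂ (Module.End ℂ (Pn n)) :=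
  Submodule.span ℂ (Set.range fun k : Fin (n + 1) => (Dop n) ^ (k : ℕ))

/-- `φ_k(z) = z^k / k!` as an element of `Pn n` (for `k ≤ n`). -/
noncomputable def phiP (n k : ℕ) (h : k ≤ n) : Pn n :=
  ⟨Polynomial.C (((Nat.factorial k : ℂ))⁻¹) * Polynomial.X ^ k, by
    rw [Pn, Polynomial.mem_degreeLT]
    exact lt_of_le_of_lt (Polynomial.degree_C_mul_X_pow_le _ _)
      (by exact_mod_cast Nat.lt_succ_of_le h)⟩

/-
The operators of `𝒟(P_n)` are polynomials in `D`, so they commute with each other; every identity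
follows from that by reassociating products: `T f = T F φ_n = F T φ_n`, and likewise for the others.
-/

lemma calD_le_adjoin_Dop (n : ℕ) :
    calD n ≤ Subalgebra.toSubmodule (Algebra.adjoin ℂ {Dop n}) :=
  Submodule.span_le.mpr <| by
    rintro _ ⟨k, rfl⟩
    exact Subalgebra.pow_mem _ (Algebra.self_mem_adjoin_singleton ℂ _) _

lemma commute_of_mem_calD {n : ℕ} {X Y : Module.End ℂ (Pn n)} (hX : X ∈ calD n)
    (hY : Y ∈ calD n) : Commute X Y :=
  Algebra.commute_of_mem_adjoin_singleton_of_commute (calD_le_adjoin_Dop n hY)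
    (Algebra.commute_of_mem_adjoin_self (calD_le_adjoin_Dop n hX)).symm

theorem star_product_identities_general (n : ℕ)
    (T F G : Module.End ℂ (Pn n)) (hT : T ∈ calD n) (hF : F ∈ calD n)
    (f : Pn n) (hFf : F (phiP n n le_rfl) = f) :
    T f = (F * T) (phiP n n le_rfl) ∧
    ((T * F) * G) (phiP n n le_rfl) = (F * (T * G)) (phiP n n le_rfl) ∧
    (F * (T * G)) (phiP n n le_rfl) = T ((F * G) (phiP n n le_rfl)) := by
  have hTF : T * F = F * T := commute_of_mem_calD hT hF
  refine ⟨?_, ?_, ?_⟩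
  · rw [← hFf, ← hTF]
    rfl
  · rw [hTF, mul_assoc]
  · rw [← mul_assoc, ← hTF, mul_assoc]
    rfl

/-- With the `⋆`-product on `P_n` defined by `f ⋆ g := ϖ(ϖ⁻¹(f) ∘ ϖ⁻¹(g))` where
`ϖ(T) = Tφ_n`: for `T ∈ 𝒟(P_n)` and all `f`, `Tf = f ⋆ ϖ(T)`, and consequently
`(Tf) ⋆ g = f ⋆ (Tg) = T(f ⋆ g)`.  Here `F, G ∈ 𝒟(P_n)` are the (unique) operators
with `ϖ(F) = f` and `ϖ(G) = g`, so that e.g. `f ⋆ ϖ(T) = ϖ(F ∘ T) = (F * T) φ_n`. -/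
theorem star_product_identities (n : ℕ) (hn : 0 < n)
    (T F G : Module.End ℂ (Pn n)) (hT : T ∈ calD n) (hF : F ∈ calD n) (hG : G ∈ calD n)
    (f g : Pn n) (hFf : F (phiP n n le_rfl) = f) (hGg : G (phiP n n le_rfl) = g) :
    T f = (F * T) (phiP n n le_rfl) ∧
    ((T * F) * G) (phiP n n le_rfl) = (F * (T * G)) (phiP n n le_rfl) ∧
    (F * (T * G)) (phiP n n le_rfl) = T ((F * G) (phiP n n le_rfl)) :=
  star_product_identities_general n T F G hT hF f hFf
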